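/- Let w ≥ 4 and 0 ≤ k ≤ w−2. In the ring of w×w matrices over the Laurent polynomial ring F₂[D, D⁻¹], regarding B and C as matrices with entries in F₂ ⊆ F₂[D, D⁻¹], one has (B + D^{-1}·C)^k = B^k + D^{-1}·Q_k, where Q_k := Σ_{i=0}^{k-1} B^i·C·B^{k-1-i}. -/

import Mathlib

open Matrix Finset

/-- The matrix `B` of MT-type recursions: first row zero, row `i` (0-indexed,
`1 ≤ i ≤ w-2`) is the standard basis row vector with a `1` in column `i+1`,
and the last row is `(a_{w-1}, …, a_0)` (stored as `a 0, …, a (w-1)`). -/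
def mtB (w : ℕ) (a : Fin w → ZMod 2) : Matrix (Fin w) (Fin w) (ZMod 2) :=
  Matrix.of fun i j =>
    if (i : ℕ) = w - 1 then a j
    else if 1 ≤ (i : ℕ) ∧ (j : ℕ) = (i : ℕ) + 1 then 1 else 0

/-- The matrix `C`: its only nonzero entry is a `1` in position `(1,2)` (1-indexed). -/
def mtC (w : ℕ) : Matrix (Fin w) (Fin w) (ZMod 2) :=
  Matrix.of fun i j => if (i : ℕ) = 0 ∧ (j : ℕ) = 1 then 1 else 0

/-- `Q_k = Σ_{i=0}^{k-1} B^i · C · B^{k-1-i}`. -/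
def mtQ (w : ℕ) (a : Fin w → ZMod 2) (k : ℕ) : Matrix (Fin w) (Fin w) (ZMod 2) :=
  ∑ i ∈ Finset.range k, (mtB w a) ^ i * mtC w * (mtB w a) ^ (k - 1 - i)

/-!
In any algebra, `(X + t • Y) ^ k` is `X ^ k + t • ∑ X ^ i * Y * X ^ (k - 1 - i)` plus terms of
order `t ^ 2`, each containing a factor `Y * X ^ j * Y` with `j + 2 ≤ k`. For `X = B`, `Y = C`
these factors vanish: row `i` of `B` is `e_{i+1}` for `1 ≤ i ≤ w - 2`, so row `1` of `B ^ j` is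
`e_{j+1}` while `j + 1 < w`. Hence `C * B ^ j` is the matrix unit at `(0, j + 1)`, and its product
with `C`, whose only nonzero row is row `0`, is zero.
-/

section AddSmulPow

variable {S A : Type*} [CommSemiring S] [Semiring A] [Algebra S A]

theorem sum_range_succ_pow_mul_mul_pow (X Y : A) (k : ℕ) :
    ∑ i ∈ range (k + 1), X ^ i * Y * X ^ (k + 1 - 1 - i)
      = (∑ i ∈ range k, X ^ i * Y * X ^ (k - 1 - i)) * X + X ^ k * Y := by
  rw [sum_range_succ, sum_mul, Nat.add_sub_cancel, Nat.sub_self, pow_zero, mul_one]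
  congr 1
  refine sum_congr rfl fun i hi => ?_
  rw [show k - i = k - 1 - i + 1 by have := mem_range.mp hi; omega, pow_succ, mul_assoc _ _ X]

theorem add_smul_pow_of_mul_pow_mul_eq_zero (t : S) (X Y : A) (k : ℕ)
    (h : ∀ j, j + 2 ≤ k → Y * X ^ j * Y = 0) :
    (X + t • Y) ^ k = X ^ k + t • ∑ i ∈ range k, X ^ i * Y * X ^ (k - 1 - i) := by
  induction k with
  | zero => simp
  | succ k ih =>
    have hQY : (∑ i ∈ range k, X ^ i * Y * X ^ (k - 1 - i)) * Y = 0 := by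
      refine sum_mul .. |>.trans <| sum_eq_zero fun i hi => ?_
      rw [mul_assoc, mul_assoc, ← mul_assoc Y, h _ (by have := mem_range.mp hi; omega),
        mul_zero]
    rw [pow_succ, ih fun j hj => h j (by omega), sum_range_succ_pow_mul_mul_pow, add_mul,
      mul_add, mul_add, smul_mul_assoc, mul_smul_comm, smul_mul_assoc, mul_smul_comm, hQY,
      smul_zero, smul_zero, pow_succ, smul_add]
    abel

end AddSmulPow

theorem mtC_mul_mtB_pow_apply (w : ℕ) (a : Fin w → ZMod 2) (j : ℕ) (hj : j + 2 ≤ w)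
    (i l : Fin w) :
    (mtC w * mtB w a ^ j) i l = if (i : ℕ) = 0 ∧ (l : ℕ) = j + 1 then 1 else 0 := by
  induction j generalizing l with
  | zero => simp [mtC]
  | succ j ih =>
    rw [pow_succ, ← mul_assoc, mul_apply, sum_eq_single (⟨j + 1, by omega⟩ : Fin w)]
    · rw [ih (by omega)]
      by_cases hi : (i : ℕ) = 0
      · simp [hi, mtB, show j + 1 ≠ w - 1 by omega]
      · simp [hi]
    · intro r _ hr
      rw [ih (by omega), if_neg fun h => hr (Fin.ext h.2), zero_mul]
    · simp

theorem mtC_mul_mtB_pow_mul_mtC (w : ℕ) (a : Fin w → ZMod 2) (j : ℕ) (hj : j + 2 ≤ w) :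
    mtC w * mtB w a ^ j * mtC w = 0 := by
  ext i l
  rw [mul_apply, Matrix.zero_apply]
  refine sum_eq_zero fun r _ => ?_
  rw [mtC_mul_mtB_pow_apply w a j hj]
  simp only [mtC, of_apply]
  split_ifs <;> simp_all

theorem stmt6 (w : ℕ) (a : Fin w → ZMod 2) (k : ℕ) (hk : k ≤ w - 2) :
    ((mtB w a).map LaurentPolynomial.C
      + (LaurentPolynomial.T (-1) : LaurentPolynomial (ZMod 2)) • (mtC w).map LaurentPolynomial.C) ^ k
    = ((mtB w a) ^ k).map LaurentPolynomial.C
      + (LaurentPolynomial.T (-1) : LaurentPolynomial (ZMod 2)) • (mtQ w a k).map LaurentPolynomial.C := by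
  let φ : Matrix (Fin w) (Fin w) (ZMod 2) →+* Matrix (Fin w) (Fin w) (LaurentPolynomial (ZMod 2)) :=
    LaurentPolynomial.C.mapMatrix
  have hCBC : ∀ j, j + 2 ≤ k → φ (mtC w) * φ (mtB w a) ^ j * φ (mtC w) = 0 := fun j hj => by
    rw [← map_pow, ← map_mul, ← map_mul, mtC_mul_mtB_pow_mul_mtC w a j (by omega), map_zero]
  have key := add_smul_pow_of_mul_pow_mul_eq_zero
    (LaurentPolynomial.T (-1) : LaurentPolynomial (ZMod 2)) _ _ k hCBC
  simp only [← map_pow, ← map_mul, ← map_sum] at key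
  exact key
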